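/- Let (V, Ω) be a symplectic vector space of dimension 2n (n ≥ 1), let r be a symmetric bilinear form on V, and let ρ ∈ End(V) be defined by Ω(X, ρY) = r(X,Y). Define E(X,Y)Z = (1/(2n+2))(2Ω(X,Y)ρZ + Ω(X,Z)ρY − Ω(Y,Z)ρX + Ω(X,ρZ)Y − Ω(Y,ρZ)X). Then E is an algebraic symplectic curvature tensor: E(X,Y) = −E(Y,X), Ω(E(X,Y)Z, T) = Ω(E(X,Y)T, Z) (i.e. each E(X,Y) ∈ sp(V,Ω)), and E(X,Y)Z + E(Y,Z)X + E(Z,X)Y = 0 for all X, Y, Z, T ∈ V. -/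

import Mathlib

/-! Skew-symmetry of `Ω` and symmetry of `(u, v) ↦ Ω(u, ρ v) = r(u, v)` bring every pairing to a
common normal form; each of the three identities is then an identity between formal linear
combinations, valid for any normalising constant. -/

section

variable {R M : Type*} [CommRing R] [AddCommGroup M] [Module R M]

def ricciTypeTensor (Ω : M →ₗ[R] M →ₗ[R] R) (ρ : M →ₗ[R] M) (c : R) (X Y Z : M) : M :=
  c • ((2 * Ω X Y) • ρ Z + (Ω X Z) • ρ Y - (Ω Y Z) • ρ X + (Ω X (ρ Z)) • Y - (Ω Y (ρ Z)) • X)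

variable {Ω : M →ₗ[R] M →ₗ[R] R} {ρ : M →ₗ[R] M} (hΩ : Ω.IsAlt)
  (hρ : ∀ u v, Ω u (ρ v) = Ω v (ρ u))
include hΩ hρ

theorem ricciTypeTensor_antisymm (c : R) (X Y Z : M) :
    ricciTypeTensor Ω ρ c X Y Z = -ricciTypeTensor Ω ρ c Y X Z := by
  rw [ricciTypeTensor, ricciTypeTensor, ← hΩ.neg Y X, hρ Y Z]
  module

theorem ricciTypeTensor_form_comm (c : R) (X Y Z T : M) :
    Ω (ricciTypeTensor Ω ρ c X Y Z) T = Ω (ricciTypeTensor Ω ρ c X Y T) Z := by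
  simp only [ricciTypeTensor, map_smul, map_add, map_sub, LinearMap.add_apply, LinearMap.sub_apply,
    LinearMap.smul_apply, smul_eq_mul]
  rw [← hΩ.neg T (ρ Z), ← hΩ.neg T (ρ Y), ← hΩ.neg T (ρ X), ← hΩ.neg Z (ρ T), ← hΩ.neg Z (ρ Y),
    ← hΩ.neg Z (ρ X), hρ T X, hρ T Y, hρ T Z, hρ Z X, hρ Z Y]
  ring

theorem ricciTypeTensor_cyclic (c : R) (X Y Z : M) :
    ricciTypeTensor Ω ρ c X Y Z + ricciTypeTensor Ω ρ c Y Z X + ricciTypeTensor Ω ρ c Z X Y =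
      0 := by
  rw [ricciTypeTensor, ricciTypeTensor, ricciTypeTensor, ← hΩ.neg Y X, ← hΩ.neg Z X,
    ← hΩ.neg Z Y, hρ Y Z, hρ Z X, hρ X Y]
  module

end

theorem ricci_type_tensor_is_curvature_tensor
    {V : Type*} [AddCommGroup V] [Module ℝ V]
    (n : ℕ)
    (Ω : V →ₗ[ℝ] V →ₗ[ℝ] ℝ)
    (hΩalt : ∀ v : V, Ω v v = 0)
    (r : V →ₗ[ℝ] V →ₗ[ℝ] ℝ) (hr : ∀ X Y : V, r X Y = r Y X)
    (ρ : V →ₗ[ℝ] V) (hρ : ∀ X Y : V, Ω X (ρ Y) = r X Y)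
    (E : V → V → V → V)
    (hE : ∀ X Y Z : V, E X Y Z =
      (2 * (n : ℝ) + 2)⁻¹ •
        ((2 * Ω X Y) • ρ Z + (Ω X Z) • ρ Y - (Ω Y Z) • ρ X
          + (Ω X (ρ Z)) • Y - (Ω Y (ρ Z)) • X)) :
    (∀ X Y Z : V, E X Y Z = - E Y X Z) ∧
    (∀ X Y Z T : V, Ω (E X Y Z) T = Ω (E X Y T) Z) ∧
    (∀ X Y Z : V, E X Y Z + E Y Z X + E Z X Y = 0) := by
  have hρ_symm : ∀ u v : V, Ω u (ρ v) = Ω v (ρ u) := fun u v ↦ by rw [hρ, hρ, hr]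
  obtain rfl : E = ricciTypeTensor Ω ρ (2 * (n : ℝ) + 2)⁻¹ := by
    funext X Y Z
    exact hE X Y Z
  exact ⟨ricciTypeTensor_antisymm hΩalt hρ_symm _, ricciTypeTensor_form_comm hΩalt hρ_symm _,
    ricciTypeTensor_cyclic hΩalt hρ_symm _⟩
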